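/- arXiv:2305.15031 — 4 statements merged into one kernel-verified Lean document; each statement's English description precedes it below -/
import Mathlib

section
/- Let m, q ≥ 1 and let f : S^m → S^q be 1-Lipschitz for the angular metrics. Let S = {u ∈ S^m : f(−u) = −f(u)}. Then: (a) for any u₁, u₂ ∈ S with u₂ ≠ ±u₁, the great circle of S^m through u₁ and u₂ is contained in S; (b) the restriction of f to S preserves distances: d_{S^q}(f(u₁), f(u₂)) = d_{S^m}(u₁, u₂) for all u₁, u₂ ∈ S. -/
/-!
Since `d(x, -y) = π - d(x, y)` on the sphere, when `f(-u) = -f(u)` the Lipschitz bound applied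
to the pairs `(u, w)` and `(-u, w)` gives both `d(f u, f w) ≤ d(u, w)` and
`π - d(f u, f w) ≤ π - d(u, w)`: `f` preserves the inner product of `u` with every point of the
sphere. If `u₁, u₂` are two such points and `z = a u₁ + b u₂` is a unit vector, then
`a f u₁ + b f u₂` is a unit vector whose inner product with the unit vector `f z` is
`⟪z, z⟫ = 1`, so `f z = a f u₁ + b f u₂`; applying this to `-z` gives `f(-z) = -f(z)`.
-/

noncomputable def ang {n : ℕ} (u v : EuclideanSpace ℝ (Fin n)) : ℝ :=
  Real.arccos (inner ℝ u v : ℝ)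

open Metric Set
open scoped RealInnerProductSpace

theorem Real.eq_of_arccos_le_of_arccos_neg_le {x y : ℝ} (hx : x ∈ Icc (-1) 1)
    (hy : y ∈ Icc (-1) 1) (h : Real.arccos x ≤ Real.arccos y)
    (h_neg : Real.arccos (-x) ≤ Real.arccos (-y)) : x = y := by
  rw [Real.arccos_neg, Real.arccos_neg] at h_neg
  exact Real.arccos_injOn hx hy (by linarith)

section

variable {E F : Type*} [NormedAddCommGroup E] [InnerProductSpace ℝ E]
  [NormedAddCommGroup F] [InnerProductSpace ℝ F] {f : E → F}

theorem inner_add_smul_eq_of_inner_eq {u₁ u₂ x : E} {v₁ v₂ y : F}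
    (h₁ : ⟪v₁, y⟫ = ⟪u₁, x⟫) (h₂ : ⟪v₂, y⟫ = ⟪u₂, x⟫) (a b : ℝ) :
    ⟪a • v₁ + b • v₂, y⟫ = ⟪a • u₁ + b • u₂, x⟫ := by
  simp only [inner_add_left, real_inner_smul_left, h₁, h₂]

theorem inner_map_eq_of_map_neg (hmap : MapsTo f (sphere 0 1) (sphere 0 1))
    (hlip : ∀ u ∈ sphere (0 : E) 1, ∀ v ∈ sphere (0 : E) 1,
      Real.arccos ⟪f u, f v⟫ ≤ Real.arccos ⟪u, v⟫)
    {u : E} (hu : u ∈ sphere 0 1) (hfu : f (-u) = -f u) {w : E} (hw : w ∈ sphere 0 1) :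
    ⟪f u, f w⟫ = ⟪u, w⟫ := by
  have h_neg := hlip (-u) (by simpa using hu) w hw
  rw [hfu, inner_neg_left, inner_neg_left] at h_neg
  exact Real.eq_of_arccos_le_of_arccos_neg_le
    (real_inner_mem_Icc_of_norm_eq_one (mem_sphere_zero_iff_norm.mp (hmap hu))
      (mem_sphere_zero_iff_norm.mp (hmap hw)))
    (real_inner_mem_Icc_of_norm_eq_one (mem_sphere_zero_iff_norm.mp hu)
      (mem_sphere_zero_iff_norm.mp hw)) (hlip u hu w hw) h_neg

theorem map_add_smul_eq_of_inner_eq (hmap : MapsTo f (sphere 0 1) (sphere 0 1))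
    {u₁ u₂ : E} (hu₁ : u₁ ∈ sphere 0 1) (hu₂ : u₂ ∈ sphere 0 1)
    (h₁ : ∀ w ∈ sphere (0 : E) 1, ⟪f u₁, f w⟫ = ⟪u₁, w⟫)
    (h₂ : ∀ w ∈ sphere (0 : E) 1, ⟪f u₂, f w⟫ = ⟪u₂, w⟫)
    {a b : ℝ} (hz : a • u₁ + b • u₂ ∈ sphere 0 1) :
    f (a • u₁ + b • u₂) = a • f u₁ + b • f u₂ := by
  set z := a • u₁ + b • u₂
  set w := a • f u₁ + b • f u₂
  have hzz : ⟪z, z⟫ = 1 := inner_self_eq_one_of_norm_eq_one (mem_sphere_zero_iff_norm.mp hz)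
  have hwfz : ⟪w, f z⟫ = 1 := hzz ▸ inner_add_smul_eq_of_inner_eq (h₁ z hz) (h₂ z hz) a b
  have hww : ⟪w, w⟫ = 1 := by
    refine hzz ▸ inner_add_smul_eq_of_inner_eq ?_ ?_ a b
    · rw [real_inner_comm, real_inner_comm z u₁]
      exact inner_add_smul_eq_of_inner_eq (h₁ u₁ hu₁) (h₂ u₁ hu₁) a b
    · rw [real_inner_comm, real_inner_comm z u₂]
      exact inner_add_smul_eq_of_inner_eq (h₁ u₂ hu₂) (h₂ u₂ hu₂) a b
  have hw : ‖w‖ = 1 := by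
    rw [real_inner_self_eq_norm_sq, pow_eq_one_iff_of_nonneg (norm_nonneg w) two_ne_zero] at hww
    exact hww
  exact ((inner_eq_one_iff_of_norm_eq_one hw (mem_sphere_zero_iff_norm.mp (hmap hz))).mp
    hwfz).symm

theorem map_neg_eq_neg_of_inner_eq (hmap : MapsTo f (sphere 0 1) (sphere 0 1))
    {u₁ u₂ : E} (hu₁ : u₁ ∈ sphere 0 1) (hu₂ : u₂ ∈ sphere 0 1)
    (h₁ : ∀ w ∈ sphere (0 : E) 1, ⟪f u₁, f w⟫ = ⟪u₁, w⟫)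
    (h₂ : ∀ w ∈ sphere (0 : E) 1, ⟪f u₂, f w⟫ = ⟪u₂, w⟫)
    {z : E} (hz : z ∈ sphere 0 1) (hz_span : z ∈ Submodule.span ℝ {u₁, u₂}) :
    f (-z) = -f z := by
  obtain ⟨a, b, rfl⟩ := Submodule.mem_span_pair.mp hz_span
  have hnz : (-a) • u₁ + (-b) • u₂ ∈ sphere (0 : E) 1 := by
    simpa only [neg_smul, ← neg_add, norm_neg, mem_sphere_zero_iff_norm] using hz
  have h_neg := map_add_smul_eq_of_inner_eq hmap hu₁ hu₂ h₁ h₂ hnz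
  rw [neg_smul, neg_smul, ← neg_add, neg_smul, neg_smul, ← neg_add] at h_neg
  rw [h_neg, map_add_smul_eq_of_inner_eq hmap hu₁ hu₂ h₁ h₂ hz]

end

theorem stmt4_general (m q : ℕ)
    (f : EuclideanSpace ℝ (Fin (m + 1)) → EuclideanSpace ℝ (Fin (q + 1)))
    (hmap : ∀ u ∈ Metric.sphere (0 : EuclideanSpace ℝ (Fin (m + 1))) 1,
      f u ∈ Metric.sphere (0 : EuclideanSpace ℝ (Fin (q + 1))) 1)
    (hlip : ∀ u ∈ Metric.sphere (0 : EuclideanSpace ℝ (Fin (m + 1))) 1,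
      ∀ v ∈ Metric.sphere (0 : EuclideanSpace ℝ (Fin (m + 1))) 1,
        ang (f u) (f v) ≤ ang u v)
    (S : Set (EuclideanSpace ℝ (Fin (m + 1))))
    (hS : S = {u | u ∈ Metric.sphere (0 : EuclideanSpace ℝ (Fin (m + 1))) 1 ∧
      f (-u) = -(f u)}) :
    (∀ u₁ ∈ S, ∀ u₂ ∈ S, u₂ ≠ u₁ → u₂ ≠ -u₁ →
      ∀ v ∈ Metric.sphere (0 : EuclideanSpace ℝ (Fin (m + 1))) 1,
        v ∈ Submodule.span ℝ ({u₁, u₂} : Set (EuclideanSpace ℝ (Fin (m + 1)))) → v ∈ S) ∧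
    (∀ u₁ ∈ S, ∀ u₂ ∈ S, ang (f u₁) (f u₂) = ang u₁ u₂) := by
  subst hS
  have h_inner {u : EuclideanSpace ℝ (Fin (m + 1))} (hu : u ∈ sphere 0 1) (hfu : f (-u) = -f u) :
      ∀ w ∈ sphere 0 1, ⟪f u, f w⟫ = ⟪u, w⟫ :=
    fun _ hw ↦ inner_map_eq_of_map_neg hmap hlip hu hfu hw
  constructor
  · rintro u₁ ⟨hu₁, hfu₁⟩ u₂ ⟨hu₂, hfu₂⟩ - - v hv hv_span
    exact ⟨hv, map_neg_eq_neg_of_inner_eq hmap hu₁ hu₂ (h_inner hu₁ hfu₁) (h_inner hu₂ hfu₂)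
      hv hv_span⟩
  · rintro u₁ ⟨hu₁, hfu₁⟩ u₂ ⟨hu₂, -⟩
    exact congrArg Real.arccos (h_inner hu₁ hfu₁ u₂ hu₂)

/-- for a 1-Lipschitz map `f : S^m → S^q` (angular metrics), the set
`S = {u : f(-u) = -f(u)}` contains the great circle through any two of its
non-antipodal, distinct points, and `f` restricted to `S` preserves distances. -/
theorem stmt4 (m q : ℕ) (hm : 1 ≤ m) (hq : 1 ≤ q)
    (f : EuclideanSpace ℝ (Fin (m + 1)) → EuclideanSpace ℝ (Fin (q + 1)))
    (hmap : ∀ u ∈ Metric.sphere (0 : EuclideanSpace ℝ (Fin (m + 1))) 1,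
      f u ∈ Metric.sphere (0 : EuclideanSpace ℝ (Fin (q + 1))) 1)
    (hlip : ∀ u ∈ Metric.sphere (0 : EuclideanSpace ℝ (Fin (m + 1))) 1,
      ∀ v ∈ Metric.sphere (0 : EuclideanSpace ℝ (Fin (m + 1))) 1,
        ang (f u) (f v) ≤ ang u v)
    (S : Set (EuclideanSpace ℝ (Fin (m + 1))))
    (hS : S = {u | u ∈ Metric.sphere (0 : EuclideanSpace ℝ (Fin (m + 1))) 1 ∧
      f (-u) = -(f u)}) :
    (∀ u₁ ∈ S, ∀ u₂ ∈ S, u₂ ≠ u₁ → u₂ ≠ -u₁ →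
      ∀ v ∈ Metric.sphere (0 : EuclideanSpace ℝ (Fin (m + 1))) 1,
        v ∈ Submodule.span ℝ ({u₁, u₂} : Set (EuclideanSpace ℝ (Fin (m + 1)))) → v ∈ S) ∧
    (∀ u₁ ∈ S, ∀ u₂ ∈ S, ang (f u₁) (f u₂) = ang u₁ u₂) :=
  stmt4_general m q f hmap hlip S hS
end

section
/- Let p, q ≥ 1. On ℝ^p ⊕ ℝ^{q+1} define the symmetric bilinear form b((a,a'),(c,c')) = ⟨a,c⟩ − ⟨a',c'⟩ (Euclidean inner products on each factor). Let f : S^{p-1} → S^q be any map, where S^{p-1} ⊂ ℝ^p and S^q ⊂ ℝ^{q+1} are the unit spheres. Suppose v = (w, w') ∈ ℝ^p ⊕ ℝ^{q+1} is nonzero, satisfies ⟨w,w⟩ = ⟨w',w'⟩ (so b(v,v) = 0), and b(v, (x, f(x))) ≤ 0 for all x ∈ S^{p-1}. Then w ≠ 0 and w' = |w| · f(w/|w|); that is, v is a positive multiple of a point (u, f(u)) on the graph of f. -/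
/-!
Isotropy gives `‖w‖ = ‖w'‖`, so `w = 0` would force `v = 0`. For `u = w / ‖w‖` the dual-cone
condition at `(u, f u)` reads `‖w'‖ = ‖w‖ ≤ ⟪w', f u⟫`, while Cauchy–Schwarz gives the reverse
inequality since `‖f u‖ = 1`; equality in Cauchy–Schwarz forces `w' = ‖w'‖ • f u`.
-/

open scoped RealInnerProductSpace

section InnerProductSpace

variable {E : Type*} [NormedAddCommGroup E] [InnerProductSpace ℝ E]

theorem eq_norm_smul_of_norm_le_inner {x y : E} (hy : ‖y‖ = 1) (h : ‖x‖ ≤ ⟪x, y⟫) :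
    x = ‖x‖ • y := by
  have hcs : ⟪x, y⟫ = ‖x‖ * ‖y‖ :=
    le_antisymm (real_inner_le_norm x y) (by rwa [hy, mul_one])
  simpa [hy] using inner_eq_norm_mul_iff_real.mp hcs

theorem real_inner_inv_norm_smul_self (x : E) : ⟪x, ‖x‖⁻¹ • x⟫ = ‖x‖ := by
  rw [real_inner_smul_right, real_inner_self_eq_norm_sq, sq, ← mul_assoc, inv_mul_mul_self]

theorem norm_eq_norm_of_real_inner_self_eq {F : Type*} [NormedAddCommGroup F]
    [InnerProductSpace ℝ F] {x : E} {y : F} (h : ⟪x, x⟫ = ⟪y, y⟫) : ‖x‖ = ‖y‖ := by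
  rw [real_inner_self_eq_norm_sq, real_inner_self_eq_norm_sq] at h
  exact (pow_left_inj₀ (norm_nonneg x) (norm_nonneg y) two_ne_zero).mp h

end InnerProductSpace

theorem stmt10_general (p q : ℕ)
    (f : EuclideanSpace ℝ (Fin p) → EuclideanSpace ℝ (Fin (q + 1)))
    (hf : ∀ x ∈ Metric.sphere (0 : EuclideanSpace ℝ (Fin p)) 1,
      f x ∈ Metric.sphere (0 : EuclideanSpace ℝ (Fin (q + 1))) 1)
    (w : EuclideanSpace ℝ (Fin p)) (w' : EuclideanSpace ℝ (Fin (q + 1)))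
    (hne : ¬ (w = 0 ∧ w' = 0))
    (hiso : (inner ℝ w w : ℝ) = (inner ℝ w' w' : ℝ))
    (hdual : ∀ x ∈ Metric.sphere (0 : EuclideanSpace ℝ (Fin p)) 1,
      (inner ℝ w x : ℝ) - (inner ℝ w' (f x) : ℝ) ≤ 0) :
    w ≠ 0 ∧ w' = ‖w‖ • f (‖w‖⁻¹ • w) := by
  have hnorm : ‖w‖ = ‖w'‖ := norm_eq_norm_of_real_inner_self_eq hiso
  have hw : w ≠ 0 := fun h0 ↦
    hne ⟨h0, norm_eq_zero.mp (by rw [← hnorm, h0, norm_zero])⟩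
  set u := ‖w‖⁻¹ • w
  have hu : u ∈ Metric.sphere 0 1 := by
    simpa using norm_smul_inv_norm (𝕜 := ℝ) hw
  have hfu : ‖f u‖ = 1 := by simpa using hf u hu
  have hle : ‖w'‖ ≤ ⟪w', f u⟫ := by
    have := hdual u hu
    rw [real_inner_inv_norm_smul_self] at this
    linarith
  refine ⟨hw, ?_⟩
  rw [hnorm]
  exact eq_norm_smul_of_norm_le_inner hfu hle

/-- for `b((a,a'),(c,c')) = ⟨a,c⟩ − ⟨a',c'⟩` on `ℝ^p ⊕ ℝ^{q+1}` and any map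
`f : S^{p-1} → S^q`, a nonzero `b`-isotropic vector `(w,w')` pairing non-positively with the
whole graph of `f` is a positive multiple of a point of the graph:
`w ≠ 0` and `w' = ‖w‖ • f(w/‖w‖)`. -/
theorem stmt10 (p q : ℕ) (hp : 1 ≤ p) (hq : 1 ≤ q)
    (f : EuclideanSpace ℝ (Fin p) → EuclideanSpace ℝ (Fin (q + 1)))
    (hf : ∀ x ∈ Metric.sphere (0 : EuclideanSpace ℝ (Fin p)) 1,
      f x ∈ Metric.sphere (0 : EuclideanSpace ℝ (Fin (q + 1))) 1)
    (w : EuclideanSpace ℝ (Fin p)) (w' : EuclideanSpace ℝ (Fin (q + 1)))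
    (hne : ¬ (w = 0 ∧ w' = 0))
    (hiso : (inner ℝ w w : ℝ) = (inner ℝ w' w' : ℝ))
    (hdual : ∀ x ∈ Metric.sphere (0 : EuclideanSpace ℝ (Fin p)) 1,
      (inner ℝ w x : ℝ) - (inner ℝ w' (f x) : ℝ) ≤ 0) :
    w ≠ 0 ∧ w' = ‖w‖ • f (‖w‖⁻¹ • w) :=
  stmt10_general p q f hf w w' hne hiso hdual
end

section
/- Let q ≥ 1 and let b be a non-degenerate symmetric bilinear form of signature (2, q) on ℝ^{q+2}. Let v₀, v₂ ∈ ℝ^{q+2} be linearly independent vectors such that the restriction of b to W = span(v₀, v₂) is positive definite, and let α ∈ ℝ. Let v₁' be the unique vector of W with b(v₁', v₀) = b(v₁', v₂) = α, and set V = {v ∈ ℝ^{q+2} : b(v,v) = 1 and b(v₀, v) = b(v, v₂) = α}. Then: (a) V = {v₁' + w : w ∈ W^⊥, b(w,w) = 1 − b(v₁', v₁')}; (b) V is nonempty if and only if b(v₁', v₁') ≥ 1; (c) the subgroup of the orthogonal group O(b) fixing both v₀ and v₂ acts transitively on V. -/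
/-- `b` has signature `(p, q)` in restriction to the submodule `W`. -/
def SignatureOn {V : Type*} [AddCommGroup V] [Module ℝ V]
    (b : V →ₗ[ℝ] V →ₗ[ℝ] ℝ) (W : Submodule ℝ V) (p q : ℕ) : Prop :=
  ∃ P N : Submodule ℝ V, P ≤ W ∧ N ≤ W ∧ P ⊔ N = W ∧
    Module.finrank ℝ P = p ∧ Module.finrank ℝ N = q ∧
    (∀ v ∈ P, v ≠ 0 → 0 < b v v) ∧ (∀ v ∈ N, v ≠ 0 → b v v < 0) ∧
    (∀ v ∈ P, ∀ w ∈ N, b v w = 0)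

/-!
Subtracting `v₁'` turns the conditions `b(v₀, v) = b(v, v₂) = α` into `v - v₁' ∈ W^⊥`, and
`b(v, v)` splits as `b(v₁', v₁') + b(w, w)` along `W ⊕ W^⊥`. The complement `W^⊥` is negative
definite: a nonzero `w ∈ W^⊥` with `b(w, w) ≥ 0` would make `W + ℝw` a positive semidefinite
subspace of dimension 3, which must meet the negative definite `q`-dimensional part of the
signature decomposition of `ℝ^{q+2}`. Hence `W^⊥`, of dimension `q ≥ 1`, takes every value
`≤ 0` as a norm, and two distinct vectors `w, w'` of the same norm in `W^⊥` are exchanged by the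
reflection in the anisotropic vector `w - w'`, which fixes `W` pointwise.
-/

open Module Submodule
open LinearMap (BilinForm)

namespace LinearMap.BilinForm

section CommRing

variable {R M : Type*} [CommRing R] [AddCommGroup M] [Module R M] {b : BilinForm R M}

lemma apply_add_add_of_mem_orthogonal (hsymm : ∀ x y, b x y = b y x) {W : Submodule R M}
    {u w : M} (hu : u ∈ W) (hw : w ∈ b.orthogonal W) :
    b (u + w) (u + w) = b u u + b w w := by
  have huw : b u w = 0 := hw u hu
  simp only [map_add, LinearMap.add_apply, huw, hsymm w u]
  ring

lemma mem_orthogonal_span_pair_iff {x y w : M} :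
    w ∈ b.orthogonal (span R {x, y}) ↔ b x w = 0 ∧ b y w = 0 := by
  refine ⟨fun h => ⟨h x (subset_span (by simp)), h y (subset_span (by simp))⟩, ?_⟩
  rintro ⟨hx, hy⟩ u hu
  obtain ⟨s, t, rfl⟩ := mem_span_pair.mp hu
  simp [hx, hy]

lemma setOf_eq_add_orthogonal_span_pair (hsymm : ∀ x y, b x y = b y x) {v₀ v₂ v₁ : M}
    (hv₁ : v₁ ∈ span R {v₀, v₂}) (c : R) {α₀ α₂ : R} (h₀ : b v₁ v₀ = α₀) (h₂ : b v₁ v₂ = α₂) :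
    {v | b v v = c ∧ b v₀ v = α₀ ∧ b v v₂ = α₂} =
      {v | ∃ w, w ∈ b.orthogonal (span R {v₀, v₂}) ∧ b w w = c - b v₁ v₁ ∧ v = v₁ + w} := by
  ext v
  constructor
  · rintro ⟨hc, hv₀, hv₂⟩
    have hw : v - v₁ ∈ b.orthogonal (span R {v₀, v₂}) :=
      mem_orthogonal_span_pair_iff.mpr
        ⟨by simp [hv₀, hsymm v₀ v₁, h₀], by simp [hsymm v₂, hv₂, h₂]⟩
    have hsplit := apply_add_add_of_mem_orthogonal hsymm hv₁ hw
    rw [add_sub_cancel] at hsplit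
    exact ⟨v - v₁, hw, by rw [← hc, hsplit]; ring, by abel⟩
  · rintro ⟨w, hw, hww, rfl⟩
    obtain ⟨hw₀, hw₂⟩ := mem_orthogonal_span_pair_iff.mp hw
    exact ⟨by rw [apply_add_add_of_mem_orthogonal hsymm hv₁ hw, hww]; ring,
      by rw [map_add, hsymm v₀ v₁, h₀, hw₀, add_zero], by simp [h₂, hsymm w, hw₂]⟩

end CommRing

section Reflection

variable {K M : Type*} [Field K] [AddCommGroup M] [Module K M] {b : BilinForm K M}

noncomputable def reflection (b : BilinForm K M) {z : M} (hz : b z z ≠ 0) : M ≃ₗ[K] M :=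
  Module.reflection (f := (2 / b z z) • b z) (x := z) (by simp [hz])

lemma reflection_apply {z : M} (hz : b z z ≠ 0) (x : M) :
    b.reflection hz x = x - (2 / b z z * b z x) • z := by
  rw [reflection, Module.reflection_apply]
  rfl

lemma reflection_apply_of_isOrtho {z x : M} (hz : b z z ≠ 0) (hx : b z x = 0) :
    b.reflection hz x = x := by
  simp [reflection_apply, hx]

lemma reflection_isometry (hsymm : ∀ x y, b x y = b y x) {z : M} (hz : b z z ≠ 0) (x y : M) :
    b (b.reflection hz x) (b.reflection hz y) = b x y := by
  simp only [reflection_apply, map_sub, map_smul, LinearMap.sub_apply, LinearMap.smul_apply,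
    smul_eq_mul, hsymm x z]
  field_simp
  ring

lemma reflection_sub_apply_left (hsymm : ∀ x y, b x y = b y x) {w w' : M}
    (hw : b w w = b w' w') (hz : b (w - w') (w - w') ≠ 0) :
    b.reflection hz w = w' := by
  have hzz : b (w - w') (w - w') = 2 * b (w - w') w := by
    simp only [map_sub, LinearMap.sub_apply, hsymm w' w, hw]; ring
  have hcoef : 2 / b (w - w') (w - w') * b (w - w') w = 1 := by
    rw [hzz] at hz ⊢
    rw [div_mul_eq_mul_div, div_self hz]
  rw [reflection_apply, hcoef, one_smul, sub_sub_cancel]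

lemma exists_isometry_fixing_of_anisotropic (hsymm : ∀ x y, b x y = b y x) {W : Submodule K M}
    (haniso : ∀ z ∈ b.orthogonal W, b z z = 0 → z = 0) {w w' : M}
    (hw : w ∈ b.orthogonal W) (hw' : w' ∈ b.orthogonal W) (hww' : b w w = b w' w') :
    ∃ g : M ≃ₗ[K] M, (∀ x y, b (g x) (g y) = b x y) ∧ (∀ u ∈ W, g u = u) ∧ g w = w' := by
  by_cases h : w = w'
  · exact ⟨LinearEquiv.refl K M, fun _ _ => rfl, fun _ _ => rfl, h⟩
  have hz : b (w - w') (w - w') ≠ 0 := fun h0 =>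
    h (sub_eq_zero.mp (haniso _ (sub_mem hw hw') h0))
  refine ⟨b.reflection hz, reflection_isometry hsymm hz, fun u hu => ?_,
    reflection_sub_apply_left hsymm hww' hz⟩
  apply reflection_apply_of_isOrtho
  rw [hsymm]
  exact sub_mem hw hw' u hu

end Reflection

section Ordered

variable {K M : Type*} [Field K] [LinearOrder K] [AddCommGroup M] [Module K M]
  {b : BilinForm K M}

lemma isCompl_orthogonal_of_posDef [FiniteDimensional K M] (hsymm : ∀ x y, b x y = b y x) {W : Submodule K M}
    (hW : ∀ u ∈ W, u ≠ 0 → 0 < b u u) : IsCompl W (b.orthogonal W) := by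
  have hanis (u : W) (hu : b u u = 0) : u = 0 := by
    by_contra hu0
    exact (hW u u.2 (by simpa using hu0)).ne' hu
  exact isCompl_orthogonal_of_restrict_nondegenerate (fun x y h => (hsymm y x).trans h)
    ⟨fun u hu => hanis u (hu u), fun u hu => hanis u (hu u)⟩

lemma finrank_add_finrank_le_of_nonneg_of_negDef [FiniteDimensional K M] {P N : Submodule K M}
    (hP : ∀ v ∈ P, 0 ≤ b v v) (hN : ∀ v ∈ N, v ≠ 0 → b v v < 0) :
    finrank K P + finrank K N ≤ finrank K M := by
  have hPN : P ⊓ N = ⊥ := eq_bot_iff.mpr fun v ⟨hvP, hvN⟩ =>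
    (mem_bot K).mpr (by_contra fun hv => (hN v hvN hv).not_ge (hP v hvP))
  calc finrank K P + finrank K N = finrank K ↥(P ⊔ N) := by
        rw [← finrank_sup_add_finrank_inf_eq, hPN, finrank_bot, add_zero]
    _ ≤ finrank K M := finrank_le _

lemma apply_self_nonneg_of_mem_sup_span_singleton [IsStrictOrderedRing K] (hsymm : ∀ x y, b x y = b y x)
    {W : Submodule K M} (hW : ∀ u ∈ W, 0 ≤ b u u) {w : M} (hw : w ∈ b.orthogonal W)
    (hww : 0 ≤ b w w) : ∀ v ∈ W ⊔ span K {w}, 0 ≤ b v v := by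
  intro v hv
  obtain ⟨u, hu, y, hy, rfl⟩ := mem_sup.mp hv
  obtain ⟨t, rfl⟩ := mem_span_singleton.mp hy
  have hsmul : b (t • w) (t • w) = t * t * b w w := by
    simp only [map_smul, LinearMap.smul_apply, smul_eq_mul]; ring
  rw [apply_add_add_of_mem_orthogonal hsymm hu (smul_mem _ t hw), hsmul]
  exact add_nonneg (hW u hu) (mul_nonneg (mul_self_nonneg t) hww)

lemma apply_self_neg_of_mem_orthogonal [IsStrictOrderedRing K] [FiniteDimensional K M]
    (hsymm : ∀ x y, b x y = b y x) {W N : Submodule K M}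
    (hW : ∀ u ∈ W, u ≠ 0 → 0 < b u u) (hN : ∀ v ∈ N, v ≠ 0 → b v v < 0)
    (hdim : finrank K M ≤ finrank K W + finrank K N) :
    ∀ w ∈ b.orthogonal W, w ≠ 0 → b w w < 0 := by
  intro w hw hw0
  by_contra! hww
  have hwW : w ∉ W := fun h => (hW w h hw0).ne' (hw w h)
  have hW' : ∀ u ∈ W, 0 ≤ b u u := fun u hu =>
    (eq_or_ne u 0).elim (fun h => by simp [h]) (fun h => (hW u hu h).le)
  have := finrank_add_finrank_le_of_nonneg_of_negDef
    (apply_self_nonneg_of_mem_sup_span_singleton hsymm hW' hw hww) hN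
  rw [finrank_sup_span_singleton hwW] at this
  omega

end Ordered

lemma exists_smul_apply_self_eq {M : Type*} [AddCommGroup M] [Module ℝ M] {b : BilinForm ℝ M}
    {w : M} (hw : b w w < 0) {c : ℝ} (hc : c ≤ 0) : ∃ t : ℝ, b (t • w) (t • w) = c := by
  refine ⟨√(c / b w w), ?_⟩
  simp only [map_smul, LinearMap.smul_apply, smul_eq_mul, ← mul_assoc,
    Real.mul_self_sqrt (div_nonneg_of_nonpos hc hw.le), div_mul_cancel₀ _ hw.ne]

end LinearMap.BilinForm

open LinearMap.BilinForm in
theorem stmt13_general (q : ℕ) (hq : 1 ≤ q)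
    (b : (Fin (q + 2) → ℝ) →ₗ[ℝ] (Fin (q + 2) → ℝ) →ₗ[ℝ] ℝ)
    (hsymm : ∀ x y, b x y = b y x)
    (hsig : SignatureOn b ⊤ 2 q)
    (v₀ v₂ : Fin (q + 2) → ℝ)
    (hli : LinearIndependent ℝ ![v₀, v₂])
    (hpos : ∀ w ∈ Submodule.span ℝ ({v₀, v₂} : Set (Fin (q + 2) → ℝ)),
      w ≠ 0 → 0 < b w w)
    (α : ℝ) (v₁' : Fin (q + 2) → ℝ)
    (hv₁'mem : v₁' ∈ Submodule.span ℝ ({v₀, v₂} : Set (Fin (q + 2) → ℝ)))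
    (hv₁'0 : b v₁' v₀ = α) (hv₁'2 : b v₁' v₂ = α) :
    ({v | b v v = 1 ∧ b v₀ v = α ∧ b v v₂ = α} : Set (Fin (q + 2) → ℝ)) =
      {v | ∃ w : Fin (q + 2) → ℝ,
        (∀ u ∈ Submodule.span ℝ ({v₀, v₂} : Set (Fin (q + 2) → ℝ)), b u w = 0) ∧
        b w w = 1 - b v₁' v₁' ∧ v = v₁' + w} ∧
    (({v | b v v = 1 ∧ b v₀ v = α ∧ b v v₂ = α} : Set (Fin (q + 2) → ℝ)).Nonempty ↔
      1 ≤ b v₁' v₁') ∧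
    (∀ u ∈ ({v | b v v = 1 ∧ b v₀ v = α ∧ b v v₂ = α} : Set (Fin (q + 2) → ℝ)),
      ∀ u' ∈ ({v | b v v = 1 ∧ b v₀ v = α ∧ b v v₂ = α} : Set (Fin (q + 2) → ℝ)),
        ∃ g : (Fin (q + 2) → ℝ) ≃ₗ[ℝ] (Fin (q + 2) → ℝ),
          (∀ x y, b (g x) (g y) = b x y) ∧ g v₀ = v₀ ∧ g v₂ = v₂ ∧ g u = u') := by
  have hWrank : finrank ℝ (span ℝ ({v₀, v₂} : Set (Fin (q + 2) → ℝ))) = 2 := by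
    rw [← Matrix.range_cons_cons_empty v₀ v₂ ![], finrank_span_eq_card hli, Fintype.card_fin]
  set W := span ℝ ({v₀, v₂} : Set (Fin (q + 2) → ℝ))
  have hset := setOf_eq_add_orthogonal_span_pair hsymm hv₁'mem 1 hv₁'0 hv₁'2
  obtain ⟨-, N, -, -, -, -, hNrank, -, hN, -⟩ := hsig
  have hneg : ∀ w ∈ orthogonal b W, w ≠ 0 → b w w < 0 :=
    apply_self_neg_of_mem_orthogonal hsymm hpos hN (by simp [hWrank, hNrank, add_comm])
  obtain ⟨w₀, hw₀, hw₀0⟩ : ∃ w₀ ∈ orthogonal b W, w₀ ≠ 0 := by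
    refine exists_mem_ne_zero_of_ne_bot fun hbot => ?_
    have := finrank_add_eq_of_isCompl (isCompl_orthogonal_of_posDef hsymm hpos)
    rw [hbot, finrank_bot, hWrank, finrank_fin_fun] at this
    omega
  refine ⟨hset, ?_, ?_⟩ <;> rw [hset]
  · refine ⟨fun ⟨_, w, hw, hww, _⟩ => ?_, fun h => ?_⟩
    · have : b w w ≤ 0 := (eq_or_ne w 0).elim (fun h => by simp [h]) (fun h => (hneg w hw h).le)
      linarith
    · obtain ⟨t, ht⟩ := exists_smul_apply_self_eq (hneg w₀ hw₀ hw₀0) (sub_nonpos.mpr h)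
      exact ⟨_, t • w₀, smul_mem _ t hw₀, ht, rfl⟩
  · rintro _ ⟨w, hw, hww, rfl⟩ _ ⟨w', hw', hww', rfl⟩
    obtain ⟨g, hg, hgW, hgw⟩ := exists_isometry_fixing_of_anisotropic hsymm
      (fun z hz hzz => by_contra fun h => (hneg z hz h).ne hzz) hw hw' (hww.trans hww'.symm)
    exact ⟨g, hg, hgW v₀ (subset_span (by simp)), hgW v₂ (subset_span (by simp)),
      by rw [map_add, hgW v₁' hv₁'mem, hgw]⟩

/-- for a non-degenerate symmetric bilinear form `b` of signature `(2,q)` on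
`ℝ^{q+2}`, linearly independent `v₀, v₂` spanning a positive definite plane `W`, and
`v₁' ∈ W` the (unique) vector with `b(v₁',v₀) = b(v₁',v₂) = α`: the set
`V = {v : b(v,v) = 1, b(v₀,v) = b(v,v₂) = α}` is `{v₁' + w : w ∈ W^⊥, b(w,w) = 1 − b(v₁',v₁')}`;
it is nonempty iff `b(v₁',v₁') ≥ 1`; and the subgroup of `O(b)` fixing `v₀` and `v₂` acts
transitively on it. -/
theorem stmt13 (q : ℕ) (hq : 1 ≤ q)
    (b : (Fin (q + 2) → ℝ) →ₗ[ℝ] (Fin (q + 2) → ℝ) →ₗ[ℝ] ℝ)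
    (hsymm : ∀ x y, b x y = b y x)
    (hnd : ∀ v, (∀ w, b v w = 0) → v = 0)
    (hsig : SignatureOn b ⊤ 2 q)
    (v₀ v₂ : Fin (q + 2) → ℝ)
    (hli : LinearIndependent ℝ ![v₀, v₂])
    (hpos : ∀ w ∈ Submodule.span ℝ ({v₀, v₂} : Set (Fin (q + 2) → ℝ)),
      w ≠ 0 → 0 < b w w)
    (α : ℝ) (v₁' : Fin (q + 2) → ℝ)
    (hv₁'mem : v₁' ∈ Submodule.span ℝ ({v₀, v₂} : Set (Fin (q + 2) → ℝ)))
    (hv₁'0 : b v₁' v₀ = α) (hv₁'2 : b v₁' v₂ = α) :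
    ({v | b v v = 1 ∧ b v₀ v = α ∧ b v v₂ = α} : Set (Fin (q + 2) → ℝ)) =
      {v | ∃ w : Fin (q + 2) → ℝ,
        (∀ u ∈ Submodule.span ℝ ({v₀, v₂} : Set (Fin (q + 2) → ℝ)), b u w = 0) ∧
        b w w = 1 - b v₁' v₁' ∧ v = v₁' + w} ∧
    (({v | b v v = 1 ∧ b v₀ v = α ∧ b v v₂ = α} : Set (Fin (q + 2) → ℝ)).Nonempty ↔
      1 ≤ b v₁' v₁') ∧
    (∀ u ∈ ({v | b v v = 1 ∧ b v₀ v = α ∧ b v v₂ = α} : Set (Fin (q + 2) → ℝ)),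
      ∀ u' ∈ ({v | b v v = 1 ∧ b v₀ v = α ∧ b v v₂ = α} : Set (Fin (q + 2) → ℝ)),
        ∃ g : (Fin (q + 2) → ℝ) ≃ₗ[ℝ] (Fin (q + 2) → ℝ),
          (∀ x y, b (g x) (g y) = b x y) ∧ g v₀ = v₀ ∧ g v₂ = v₂ ∧ g u = u') :=
  stmt13_general q hq b hsymm hsig v₀ v₂ hli hpos α v₁' hv₁'mem hv₁'0 hv₁'2
end

section
/- Let p, q ≥ 1 and define b on ℝ^p ⊕ ℝ^{q+1} by b((a,a'),(c,c')) = ⟨a,c⟩ − ⟨a',c'⟩. Let f : S^{p-1} → S^q be 1-Lipschitz for the angular metrics. Then, for u ∈ S^{p-1}, the vector (u, f(u)) satisfies b((u, f(u)), (x, f(x))) = 0 for all x ∈ S^{p-1} if and only if f(−u) = −f(u). In other words, the b-orthogonal of the graph of f inside the span of the graph is generated by the points (u, f(u)) with f(−u) = −f(u). -/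
/-!
A 1-Lipschitz map `f` of spheres satisfies `d(f u, f x) ≤ d(u, x)`. If `f (-u) = -f u`, the
same bound at `-u` reads `π - d(f u, f x) ≤ π - d(u, x)`, so `f` preserves all distances from `u`,
i.e. `⟪u, x⟫ = ⟪f u, f x⟫` for every `x`. Conversely, orthogonality against `x = -u` gives
`⟪f u, f (-u)⟫ = -1`, which for unit vectors forces `f (-u) = -f u`.
-/

open Real

section Angle

variable {n : ℕ}

lemma ang_neg_left (u v : EuclideanSpace ℝ (Fin n)) : ang (-u) v = π - ang u v := by
  simp only [ang, inner_neg_left, arccos_neg]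

lemma cos_ang {u v : EuclideanSpace ℝ (Fin n)} (hu : ‖u‖ ≤ 1) (hv : ‖v‖ ≤ 1) :
    cos (ang u v) = inner ℝ u v := by
  have hbound : |inner ℝ u v| ≤ 1 :=
    (abs_real_inner_le_norm u v).trans (mul_le_one₀ hu (norm_nonneg v) hv)
  exact cos_arccos (abs_le.mp hbound).1 (abs_le.mp hbound).2

lemma inner_eq_of_ang_eq {m : ℕ} {u v : EuclideanSpace ℝ (Fin n)}
    {x y : EuclideanSpace ℝ (Fin m)} (hu : ‖u‖ ≤ 1) (hv : ‖v‖ ≤ 1) (hx : ‖x‖ ≤ 1)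
    (hy : ‖y‖ ≤ 1) (h : ang u v = ang x y) : inner ℝ u v = inner ℝ x y := by
  rw [← cos_ang hu hv, h, cos_ang hx hy]

end Angle

section SphereMap

variable {p q : ℕ} {f : EuclideanSpace ℝ (Fin p) → EuclideanSpace ℝ (Fin q)}

lemma ang_map_eq_of_map_neg
    (hlip : ∀ u ∈ Metric.sphere (0 : EuclideanSpace ℝ (Fin p)) 1,
      ∀ v ∈ Metric.sphere (0 : EuclideanSpace ℝ (Fin p)) 1, ang (f u) (f v) ≤ ang u v)
    {u x : EuclideanSpace ℝ (Fin p)} (hu : u ∈ Metric.sphere 0 1) (hx : x ∈ Metric.sphere 0 1)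
    (hanti : f (-u) = -f u) : ang (f u) (f x) = ang u x := by
  have hneg := hlip (-u) (by simpa using hu) x hx
  rw [hanti, ang_neg_left, ang_neg_left] at hneg
  exact le_antisymm (hlip u hu x hx) (by linarith)

lemma map_neg_of_inner_map_neg_eq_neg_one
    (hmap : ∀ u ∈ Metric.sphere (0 : EuclideanSpace ℝ (Fin p)) 1,
      f u ∈ Metric.sphere (0 : EuclideanSpace ℝ (Fin q)) 1)
    {u : EuclideanSpace ℝ (Fin p)} (hu : u ∈ Metric.sphere 0 1)
    (h : inner ℝ (f u) (f (-u)) = -1) : f (-u) = -f u := by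
  have hnu : -u ∈ Metric.sphere (0 : EuclideanSpace ℝ (Fin p)) 1 := by simpa using hu
  rw [inner_eq_neg_one_iff_of_norm_eq_one (mem_sphere_zero_iff_norm.mp (hmap u hu))
    (mem_sphere_zero_iff_norm.mp (hmap _ hnu))] at h
  rw [h, neg_neg]

end SphereMap

theorem stmt16_general (p q : ℕ)
    (f : EuclideanSpace ℝ (Fin p) → EuclideanSpace ℝ (Fin (q + 1)))
    (hmap : ∀ u ∈ Metric.sphere (0 : EuclideanSpace ℝ (Fin p)) 1,
      f u ∈ Metric.sphere (0 : EuclideanSpace ℝ (Fin (q + 1))) 1)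
    (hlip : ∀ u ∈ Metric.sphere (0 : EuclideanSpace ℝ (Fin p)) 1,
      ∀ v ∈ Metric.sphere (0 : EuclideanSpace ℝ (Fin p)) 1,
        ang (f u) (f v) ≤ ang u v) :
    ∀ u ∈ Metric.sphere (0 : EuclideanSpace ℝ (Fin p)) 1,
      ((∀ x ∈ Metric.sphere (0 : EuclideanSpace ℝ (Fin p)) 1,
        (inner ℝ u x : ℝ) - (inner ℝ (f u) (f x) : ℝ) = 0) ↔ f (-u) = -(f u)) := by
  intro u hu
  have hnorm {w : EuclideanSpace ℝ (Fin p)} (hw : w ∈ Metric.sphere 0 1) :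
      ‖w‖ ≤ 1 := (mem_sphere_zero_iff_norm.mp hw).le
  have hnorm_map {w : EuclideanSpace ℝ (Fin p)} (hw : w ∈ Metric.sphere 0 1) :
      ‖f w‖ ≤ 1 := (mem_sphere_zero_iff_norm.mp (hmap w hw)).le
  constructor
  · intro horth
    have horth_neg := horth (-u) (by simpa using hu)
    rw [inner_neg_right, real_inner_self_eq_norm_sq, mem_sphere_zero_iff_norm.mp hu] at horth_neg
    exact map_neg_of_inner_map_neg_eq_neg_one hmap hu (by linarith)
  · intro hanti x hx
    rw [sub_eq_zero]
    exact (inner_eq_of_ang_eq (hnorm_map hu) (hnorm_map hx) (hnorm hu) (hnorm hx)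
      (ang_map_eq_of_map_neg hlip hu hx hanti)).symm

/-- for `b((a,a'),(c,c')) = ⟨a,c⟩ − ⟨a',c'⟩` on `ℝ^p ⊕ ℝ^{q+1}` and a
1-Lipschitz (for the angular metrics) map `f : S^{p-1} → S^q`, a point `(u, f(u))` of the
graph of `f` is `b`-orthogonal to the whole graph iff `f(−u) = −f(u)`. -/
theorem stmt16 (p q : ℕ) (hp : 1 ≤ p) (hq : 1 ≤ q)
    (f : EuclideanSpace ℝ (Fin p) → EuclideanSpace ℝ (Fin (q + 1)))
    (hmap : ∀ u ∈ Metric.sphere (0 : EuclideanSpace ℝ (Fin p)) 1,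
      f u ∈ Metric.sphere (0 : EuclideanSpace ℝ (Fin (q + 1))) 1)
    (hlip : ∀ u ∈ Metric.sphere (0 : EuclideanSpace ℝ (Fin p)) 1,
      ∀ v ∈ Metric.sphere (0 : EuclideanSpace ℝ (Fin p)) 1,
        ang (f u) (f v) ≤ ang u v) :
    ∀ u ∈ Metric.sphere (0 : EuclideanSpace ℝ (Fin p)) 1,
      ((∀ x ∈ Metric.sphere (0 : EuclideanSpace ℝ (Fin p)) 1,
        (inner ℝ u x : ℝ) - (inner ℝ (f u) (f x) : ℝ) = 0) ↔ f (-u) = -(f u)) :=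
  stmt16_general p q f hmap hlip
end
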